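/- Let (λ_m)_{m≥1} be a nonincreasing summable sequence of nonnegative reals with ∑_{m=1}^∞ λ_m = 1 and with finite entropy, i.e. the series H(λ) := ∑_{m=1}^∞ (−λ_m log λ_m) converges. For each d ≥ 1 let c^{(d)} and r^{(d)} be the two marginal sequences of the product-coarse-graining at scale d. Then H(c^{(d)}) + H(r^{(d)}) tends to H(λ) as d → ∞, where H(c^{(d)}) := ∑_{k=1}^d (−c^{(d)}_k log c^{(d)}_k) and H(r^{(d)}) := ∑_{i=0}^∞ (−r^{(d)}_i log r^{(d)}_i). -/

import Mathlib

/-!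
Coarse-graining never increases entropy: with `η x = -x log x`, `η (∑ gᵢ) ≤ ∑ η gᵢ` for
nonnegative `gᵢ`, because each `gᵢ` is at most the sum and `-log` is antitone. Applied to the
columns this gives `H(c) ≤ H(λ)`; applied to every row but the first it gives
`H(r) ≤ η r₀ + ∑_{m ≥ d} η λ_m`, and both correction terms vanish as `d → ∞` since
`r₀ = ∑_{m < d} λ_m → 1`. Conversely `λ_k ≤ c_k ≤ 1` and `η` has slope at least `-1` on `[0, 1]`,
so `H(c) ≥ ∑_{k < d} η λ_k - ∑_{m ≥ d} λ_m → H(λ)`, while `H(r) ≥ 0`.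
-/

/-- Column marginal `c^{(d)}_k = ∑_{j=0}^∞ λ_{j·d+k}` (0-indexed: `k < d`). -/
noncomputable def cMarginal (lam : ℕ → ℝ) (d k : ℕ) : ℝ := ∑' j : ℕ, lam (j * d + k)

/-- Row marginal `r^{(d)}_i = ∑_{l=1}^d λ_{i·d+l}` (0-indexed in `l`). -/
noncomputable def rMarginal (lam : ℕ → ℝ) (d i : ℕ) : ℝ := ∑ l ∈ Finset.range d, lam (i * d + l)

open Real Filter Topology Finset

namespace Real

lemma neg_mul_log_le_negMulLog {x y : ℝ} (hx : 0 ≤ x) (hxy : x ≤ y) :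
    -x * log y ≤ negMulLog x := by
  rcases hx.eq_or_lt with rfl | hx
  · simp
  · rw [negMulLog, neg_mul, neg_mul, neg_le_neg_iff]
    exact mul_le_mul_of_nonneg_left (log_le_log hx hxy) hx.le

lemma negMulLog_tsum_le {ι : Type*} {g : ι → ℝ} (hg : ∀ i, 0 ≤ g i) (hs : Summable g)
    (hη : Summable fun i => negMulLog (g i)) :
    negMulLog (∑' i, g i) ≤ ∑' i, negMulLog (g i) := by
  rw [negMulLog, neg_mul, ← mul_neg, ← tsum_mul_right]
  refine hs.mul_right _ |>.tsum_le_tsum (fun i => ?_) hη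
  rw [mul_neg, ← neg_mul]
  exact neg_mul_log_le_negMulLog (hg i) (hs.le_tsum i fun j _ => hg j)

lemma negMulLog_sum_le {ι : Type*} (s : Finset ι) {g : ι → ℝ} (hg : ∀ i ∈ s, 0 ≤ g i) :
    negMulLog (∑ i ∈ s, g i) ≤ ∑ i ∈ s, negMulLog (g i) := by
  rw [negMulLog, neg_mul, ← mul_neg, sum_mul]
  refine sum_le_sum fun i hi => ?_
  rw [mul_neg, ← neg_mul]
  exact neg_mul_log_le_negMulLog (hg i hi) (single_le_sum hg hi)

lemma negMulLog_sub_le_negMulLog {x y : ℝ} (hx : 0 ≤ x) (hxy : x ≤ y) (hy : y ≤ 1) :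
    negMulLog x - (y - x) ≤ negMulLog y := by
  rcases hx.eq_or_lt with rfl | hx
  · linarith [negMulLog_nonneg (hx.trans hxy) hy, negMulLog_zero]
  · have hy0 : 0 < y := hx.trans_le hxy
    have hlog : x * log (y / x) ≤ y - x := by
      calc x * log (y / x) ≤ x * (y / x - 1) :=
            mul_le_mul_of_nonneg_left (log_le_sub_one_of_pos (div_pos hy0 hx)) hx.le
        _ = y - x := by field_simp
    have hrest : (y - x) * log y ≤ 0 :=
      mul_nonpos_of_nonneg_of_nonpos (by linarith) (log_nonpos hy0.le hy)
    rw [log_div hy0.ne' hx.ne', mul_sub] at hlog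
    rw [sub_mul] at hrest
    simp only [negMulLog, neg_mul]
    linarith

end Real

lemma HasSum.sum_range_mul_add {M : Type*} [AddCommMonoid M] [TopologicalSpace M]
    [ContinuousAdd M] [RegularSpace M] {f : ℕ → M} {a : M} (hf : HasSum f a) {d : ℕ}
    (hd : 0 < d) : HasSum (fun i => ∑ l ∈ range d, f (i * d + l)) a := by
  have : NeZero d := ⟨hd.ne'⟩
  refine ((Nat.divModEquiv d).symm.hasSum_iff.mpr hf).prod_fiberwise fun i => ?_
  rw [← Fin.sum_univ_eq_sum_range (fun l => f (i * d + l))]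
  exact hasSum_fintype _

section ResidueClasses

variable {E : Type*} [AddCommGroup E] [UniformSpace E] [IsUniformAddGroup E] [CompleteSpace E]
  {f : ℕ → E} {d : ℕ}

lemma Summable.comp_mul_add (hf : Summable f) (hd : 0 < d) (k : ℕ) :
    Summable fun j => f (j * d + k) :=
  hf.comp_injective ((add_left_injective k).comp (mul_left_injective₀ hd.ne'))

lemma tsum_eq_sum_range_tsum_mul_add [T2Space E] (hf : Summable f) (hd : 0 < d) :
    ∑' n, f n = ∑ k ∈ range d, ∑' j, f (j * d + k) := by
  have : NeZero d := ⟨hd.ne'⟩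
  have := (Equiv.prodComm _ _).hasSum_iff.mpr <|
    (Nat.divModEquiv d).symm.hasSum_iff.mpr hf.hasSum
  rw [← Fin.sum_univ_eq_sum_range (fun k => ∑' j, f (j * d + k))]
  exact (this.prod_fiberwise fun k => (hf.comp_mul_add hd k).hasSum).unique (hasSum_fintype _)

end ResidueClasses

section Marginals

variable {lam : ℕ → ℝ} {d : ℕ}

lemma cMarginal_nonneg (hnn : ∀ n, 0 ≤ lam n) (k : ℕ) : 0 ≤ cMarginal lam d k :=
  tsum_nonneg fun _ => hnn _

lemma rMarginal_nonneg (hnn : ∀ n, 0 ≤ lam n) (i : ℕ) : 0 ≤ rMarginal lam d i :=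
  sum_nonneg fun _ _ => hnn _

@[simp]
lemma rMarginal_zero : rMarginal lam d 0 = ∑ l ∈ range d, lam l := by
  simp [rMarginal]

lemma sum_cMarginal (hsum : Summable lam) (hd : 0 < d) :
    ∑ k ∈ range d, cMarginal lam d k = ∑' n, lam n :=
  (tsum_eq_sum_range_tsum_mul_add hsum hd).symm

lemma hasSum_rMarginal (hsum : Summable lam) (hd : 0 < d) :
    HasSum (rMarginal lam d) (∑' n, lam n) :=
  hsum.hasSum.sum_range_mul_add hd

lemma le_cMarginal (hnn : ∀ n, 0 ≤ lam n) (hsum : Summable lam) (hd : 0 < d) (k : ℕ) :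
    lam k ≤ cMarginal lam d k := by
  simpa [cMarginal] using (hsum.comp_mul_add hd k).le_tsum 0 fun _ _ => hnn _

lemma sum_negMulLog_cMarginal_le (hnn : ∀ n, 0 ≤ lam n) (hsum : Summable lam)
    (hent : Summable fun n => negMulLog (lam n)) (hd : 0 < d) :
    ∑ k ∈ range d, negMulLog (cMarginal lam d k) ≤ ∑' n, negMulLog (lam n) := by
  rw [tsum_eq_sum_range_tsum_mul_add hent hd]
  exact sum_le_sum fun k _ =>
    negMulLog_tsum_le (fun _ => hnn _) (hsum.comp_mul_add hd k) (hent.comp_mul_add hd k)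

lemma sum_negMulLog_sub_le_sum_negMulLog_cMarginal (hnn : ∀ n, 0 ≤ lam n)
    (hsum : Summable lam) (h1 : ∑' n, lam n = 1) (hd : 0 < d) :
    ∑ k ∈ range d, negMulLog (lam k) - (1 - ∑ k ∈ range d, lam k) ≤
      ∑ k ∈ range d, negMulLog (cMarginal lam d k) := by
  have hc : ∑ k ∈ range d, cMarginal lam d k = 1 := (sum_cMarginal hsum hd).trans h1
  rw [← hc, ← sum_sub_distrib, ← sum_sub_distrib]
  refine sum_le_sum fun k hk =>
    negMulLog_sub_le_negMulLog (hnn k) (le_cMarginal hnn hsum hd k) ?_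
  exact (single_le_sum (fun k _ => cMarginal_nonneg hnn k) hk).trans_eq hc

lemma negMulLog_rMarginal_nonneg (hnn : ∀ n, 0 ≤ lam n) (hsum : Summable lam)
    (h1 : ∑' n, lam n = 1) (hd : 0 < d) (i : ℕ) : 0 ≤ negMulLog (rMarginal lam d i) :=
  negMulLog_nonneg (rMarginal_nonneg hnn i)
    (h1 ▸ le_hasSum (hasSum_rMarginal hsum hd) i fun j _ => rMarginal_nonneg hnn j)

lemma tsum_negMulLog_rMarginal_le (hnn : ∀ n, 0 ≤ lam n) (hsum : Summable lam)
    (h1 : ∑' n, lam n = 1) (hent : Summable fun n => negMulLog (lam n)) (hd : 0 < d) :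
    ∑' i, negMulLog (rMarginal lam d i) ≤ negMulLog (∑ l ∈ range d, lam l) +
      (∑' n, negMulLog (lam n) - ∑ l ∈ range d, negMulLog (lam l)) := by
  set B : ℕ → ℝ := fun i => ∑ l ∈ range d, negMulLog (lam (i * d + l))
  have hB : HasSum B (∑' n, negMulLog (lam n)) := hent.hasSum.sum_range_mul_add hd
  have hB₀ : B 0 = ∑ l ∈ range d, negMulLog (lam l) := by simp [B]
  have hle : ∀ i, negMulLog (rMarginal lam d i) ≤ B i := fun i =>
    negMulLog_sum_le _ fun _ _ => hnn _
  have hF : Summable fun i => negMulLog (rMarginal lam d i) :=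
    hB.summable.of_nonneg_of_le (negMulLog_rMarginal_nonneg hnn hsum h1 hd) hle
  have hBtail : HasSum (fun i => B (i + 1)) (∑' n, negMulLog (lam n) - B 0) := by
    simpa using (hasSum_nat_add_iff' 1).mpr hB
  rw [hF.tsum_eq_zero_add, rMarginal_zero, ← hB₀]
  gcongr
  exact ((summable_nat_add_iff 1).mpr hF).tsum_le_tsum (fun i => hle (i + 1)) hBtail.summable
    |>.trans_eq hBtail.tsum_eq

end Marginals

theorem stmt4_general (lam : ℕ → ℝ) (hnn : ∀ n, 0 ≤ lam n)
    (hsum : Summable lam) (h1 : ∑' n, lam n = 1)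
    (hent : Summable fun n => Real.negMulLog (lam n)) :
    Filter.Tendsto
      (fun d : ℕ => (∑ k ∈ Finset.range d, Real.negMulLog (cMarginal lam d k)) +
        ∑' i : ℕ, Real.negMulLog (rMarginal lam d i))
      Filter.atTop (nhds (∑' n, Real.negMulLog (lam n))) := by
  have hP := hent.hasSum.tendsto_sum_nat
  have hR : Tendsto (fun d => ∑ l ∈ range d, lam l) atTop (𝓝 1) :=
    h1 ▸ hsum.hasSum.tendsto_sum_nat
  have hQ := (continuous_negMulLog.tendsto 1).comp hR
  refine tendsto_of_tendsto_of_tendsto_of_le_of_le'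
    (g := fun d => ∑ k ∈ range d, negMulLog (lam k) - (1 - ∑ k ∈ range d, lam k))
    (h := fun d => ∑' n, negMulLog (lam n) + (negMulLog (∑ l ∈ range d, lam l) +
      (∑' n, negMulLog (lam n) - ∑ l ∈ range d, negMulLog (lam l)))) ?_ ?_ ?_ ?_
  · simpa using hP.sub ((tendsto_const_nhds (x := (1 : ℝ))).sub hR)
  · simpa using (tendsto_const_nhds (x := ∑' n, negMulLog (lam n))).add
      (hQ.add ((tendsto_const_nhds (x := ∑' n, negMulLog (lam n))).sub hP))
  · filter_upwards [eventually_gt_atTop 0] with d hd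
    exact le_add_of_le_of_nonneg (sum_negMulLog_sub_le_sum_negMulLog_cMarginal hnn hsum h1 hd)
      (tsum_nonneg (negMulLog_rMarginal_nonneg hnn hsum h1 hd))
  · filter_upwards [eventually_gt_atTop 0] with d hd
    exact add_le_add (sum_negMulLog_cMarginal_le hnn hsum hent hd)
      (tsum_negMulLog_rMarginal_le hnn hsum h1 hent hd)

/-- `H(c^{(d)}) + H(r^{(d)}) → H(λ)` as `d → ∞`, where `H` is the Shannon entropy
`∑ -p log p` (with `0 log 0 = 0`, as encoded by `Real.negMulLog`). -/
theorem stmt4 (lam : ℕ → ℝ) (hanti : Antitone lam) (hnn : ∀ n, 0 ≤ lam n)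
    (hsum : Summable lam) (h1 : ∑' n, lam n = 1)
    (hent : Summable fun n => Real.negMulLog (lam n)) :
    Filter.Tendsto
      (fun d : ℕ => (∑ k ∈ Finset.range d, Real.negMulLog (cMarginal lam d k)) +
        ∑' i : ℕ, Real.negMulLog (rMarginal lam d i))
      Filter.atTop (nhds (∑' n, Real.negMulLog (lam n))) :=
  stmt4_general lam hnn hsum h1 hent
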